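/- In a finite MDP with nonnegative rewards where under all strategies the probability of absorption in F by step n tends to 1, if P solves the optimality equations and for every Max-state s and every enabled action a we have P(s) ≥ π(s,a) + Σ_{s'} p(s'|s,a)·P(s'), then for the ε-greedy Min strategy μ_ε and any Max strategy χ, the inequality P(s) ≥ E^{μ_ε,χ}_s[Σ_{i=1}^{τ_F} π(X_{i−1}, Y_i)] − ε holds, where τ_F = min{i : X_i ∈ F}. Consequently sup_χ inf_μ of the expected reachability-reward equals inf_μ sup_χ of it (the game is determined), with common value P. -/
import Mathlib


open Finset

/-- A finite Markov decision process with enabled actions, transition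
probabilities, nonnegative rewards and a set of final states. -/
structure FinMDP (S A : Type) [Fintype S] [Fintype A] where
  enabled : S → Finset A
  enabled_nonempty : ∀ s, (enabled s).Nonempty
  prob : S → A → S → ℝ
  prob_nonneg : ∀ s a s', 0 ≤ prob s a s'
  prob_sum : ∀ s, ∀ a ∈ enabled s, ∑ s' : S, prob s a s' = 1
  rew : S → A → ℝ
  rew_nonneg : ∀ s a, 0 ≤ rew s a
  final : Finset S

variable {S A : Type} [Fintype S] [Fintype A] [DecidableEq S] [DecidableEq A]

/-- A (randomized, history-dependent) strategy: a distribution over enabled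
actions for each history (`past`, current state). -/
def ValidStrat (M : FinMDP S A) (σ : List S → S → A → ℝ) : Prop :=
  ∀ past s, (∀ a, 0 ≤ σ past s a) ∧ (∑ a ∈ M.enabled s, σ past s a = 1) ∧
    ∀ a ∉ M.enabled s, σ past s a = 0

/-- A strategy is pure if at every history it puts all mass on one enabled action. -/
def PureStrat (M : FinMDP S A) (σ : List S → S → A → ℝ) : Prop :=
  ∀ past s, ∃ a ∈ M.enabled s, ∀ a', σ past s a' = if a' = a then 1 else 0

/-- Combine a strategy for player Min (used at states in `SMin`) with a
strategy for player Max (used elsewhere). -/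
def combine (SMin : Finset S) (μ χ : List S → S → A → ℝ) :
    List S → S → A → ℝ :=
  fun past s => if s ∈ SMin then μ past s else χ past s

/-- Expected reward accumulated up to `min(n, hitting time of the final set)`,
starting from history `past` and current state `s`, under strategy `σ`. -/
def EVr (M : FinMDP S A) (σ : List S → S → A → ℝ) :
    ℕ → List S → S → ℝ
  | 0, _, _ => 0
  | n + 1, past, s =>
      if s ∈ M.final then 0 else
        ∑ a ∈ M.enabled s, σ past s a *
          (M.rew s a + ∑ s' : S, M.prob s a s' * EVr M σ n (past ++ [s]) s')

/-- Probability that the chain (with final states absorbing) is at `s'` after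
`n` steps, starting from history `past` and state `s`, under `σ`. -/
def stateProb (M : FinMDP S A) (σ : List S → S → A → ℝ) :
    ℕ → List S → S → S → ℝ
  | 0, _, s, s' => if s' = s then 1 else 0
  | n + 1, past, s, s' =>
      if s ∈ M.final then (if s' = s then 1 else 0) else
        ∑ a ∈ M.enabled s, σ past s a *
          ∑ s'' : S, M.prob s a s'' * stateProb M σ n (past ++ [s]) s'' s'

/-- Total expected reward accumulated before reaching the final set. -/
noncomputable def EReach (M : FinMDP S A) (σ : List S → S → A → ℝ) (s : S) : ℝ :=
  ⨆ n : ℕ, EVr M σ n [] s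

/-- One-step Bellman value of action `a` at state `s` w.r.t. `P`. -/
def Bell (M : FinMDP S A) (P : S → ℝ) (s : S) (a : A) : ℝ :=
  M.rew s a + ∑ s' : S, M.prob s a s' * P s'

/-- `P` solves the expected reachability-reward optimality equations. -/
def OptEq (M : FinMDP S A) (SMin : Finset S) (P : S → ℝ) : Prop :=
  (∀ s ∈ M.final, P s = 0) ∧
  (∀ s, s ∉ M.final → s ∈ SMin →
    P s = (M.enabled s).inf' (M.enabled_nonempty s) (Bell M P s)) ∧
  (∀ s, s ∉ M.final → s ∉ SMin →
    P s = (M.enabled s).sup' (M.enabled_nonempty s) (Bell M P s))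

/-- The `ε`-greedy property for a Min strategy: at the `n`-th step (history of
length `n`) it only uses actions whose Bellman value is within `ε/2^{n+1}`
of `P`. -/
def Greedy (M : FinMDP S A) (SMin : Finset S) (P : S → ℝ) (ε : ℝ)
    (μ : List S → S → A → ℝ) : Prop :=
  ∀ past s, s ∈ SMin → s ∉ M.final → ∀ a ∈ M.enabled s, μ past s a ≠ 0 →
    Bell M P s a ≤ P s + ε / 2 ^ (past.length + 1)


set_option linter.unusedSectionVars false
section Aux
variable {S A : Type} [Fintype S] [Fintype A] [DecidableEq S] [DecidableEq A]
variable (M : FinMDP S A)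

lemma sum_weight_mul_le {σ : List S → S → A → ℝ} (hσ : ValidStrat M σ)
    (past : List S) (s : S) (x : A → ℝ) {c : ℝ}
    (h : ∀ a ∈ M.enabled s, σ past s a ≠ 0 → x a ≤ c) :
    ∑ a ∈ M.enabled s, σ past s a * x a ≤ c := by
  have h1 : ∑ a ∈ M.enabled s, σ past s a * x a ≤ ∑ a ∈ M.enabled s, σ past s a * c := by
    apply Finset.sum_le_sum
    intro a ha
    by_cases h0 : σ past s a = 0
    · simp [h0]
    · exact mul_le_mul_of_nonneg_left (h a ha h0) ((hσ past s).1 a)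
  calc _ ≤ _ := h1
    _ = c := by rw [← Finset.sum_mul, (hσ past s).2.1, one_mul]

lemma EVr_nonneg {σ : List S → S → A → ℝ} (hσ : ValidStrat M σ) :
    ∀ (n : ℕ) (past : List S) (s : S), 0 ≤ EVr M σ n past s := by
  intro n
  induction n with
  | zero => intro past s; simp [EVr]
  | succ n ih =>
    intro past s
    simp only [EVr]
    split
    · exact le_refl 0
    · apply Finset.sum_nonneg
      intro a ha
      apply mul_nonneg ((hσ past s).1 a)
      apply add_nonneg (M.rew_nonneg s a)
      apply Finset.sum_nonneg
      intro s' _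
      exact mul_nonneg (M.prob_nonneg _ _ _) (ih _ s')

lemma combine_valid (SMin : Finset S) {μ χ : List S → S → A → ℝ}
    (hμ : ValidStrat M μ) (hχ : ValidStrat M χ) :
    ValidStrat M (combine SMin μ χ) := by
  intro past s
  unfold combine
  split
  · exact hμ past s
  · exact hχ past s

lemma EVr_le_greedy {μ χ : List S → S → A → ℝ} (hμ : ValidStrat M μ) (hχ : ValidStrat M χ)
    (SMin : Finset S) (P : S → ℝ) (hP0 : ∀ s, 0 ≤ P s) {ε : ℝ} (hε : 0 ≤ ε)
    (hg : Greedy M SMin P ε μ)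
    (hMax : ∀ s, s ∉ M.final → s ∉ SMin → ∀ a ∈ M.enabled s, Bell M P s a ≤ P s) :
    ∀ (n : ℕ) (past : List S) (s : S),
      EVr M (combine SMin μ χ) n past s ≤ P s + ε / 2 ^ past.length := by
  have hσ : ValidStrat M (combine SMin μ χ) := combine_valid M SMin hμ hχ
  intro n
  induction n with
  | zero =>
    intro past s
    simp only [EVr]
    have : 0 ≤ ε / 2 ^ past.length := by positivity
    linarith [hP0 s]
  | succ n ih =>
    intro past s
    simp only [EVr]
    split
    · rename_i hf
      have : 0 ≤ ε / 2 ^ past.length := by positivity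
      linarith [hP0 s]
    · rename_i hf
      apply sum_weight_mul_le M hσ
      intro a ha hne
      have hlen : (past ++ [s]).length = past.length + 1 := by simp
      have hhalf : ε / 2 ^ (past.length + 1) + ε / 2 ^ (past.length + 1) = ε / 2 ^ past.length := by
        rw [pow_succ]
        have h2 : (2:ℝ) ^ past.length ≠ 0 := by positivity
        field_simp
        ring
      have hinner : M.rew s a + ∑ s' : S, M.prob s a s' * EVr M (combine SMin μ χ) n (past ++ [s]) s'
          ≤ Bell M P s a + ε / 2 ^ (past.length + 1) := by
        have : ∑ s' : S, M.prob s a s' * EVr M (combine SMin μ χ) n (past ++ [s]) s'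
            ≤ ∑ s' : S, M.prob s a s' * (P s' + ε / 2 ^ (past.length + 1)) := by
          apply Finset.sum_le_sum
          intro s' _
          apply mul_le_mul_of_nonneg_left _ (M.prob_nonneg s a s')
          have := ih (past ++ [s]) s'
          rwa [hlen] at this
        have heq : ∑ s' : S, M.prob s a s' * (P s' + ε / 2 ^ (past.length + 1))
            = (∑ s' : S, M.prob s a s' * P s') + ε / 2 ^ (past.length + 1) := by
          simp only [mul_add, Finset.sum_add_distrib, ← Finset.sum_mul,
            M.prob_sum s a ha, one_mul]
        rw [heq] at this
        unfold Bell
        linarith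
      have hd : 0 ≤ ε / 2 ^ (past.length + 1) := by positivity
      by_cases hsm : s ∈ SMin
      · have hμne : μ past s a ≠ 0 := by
          simpa [combine, hsm] using hne
        have := hg past s hsm hf a ha hμne
        linarith
      · have := hMax s hf hsm a ha
        linarith

/-- Maximal probability of surviving (staying outside `final`) for `n` steps. -/
def uSurv (M : FinMDP S A) : ℕ → S → ℝ
  | 0, s => if s ∈ M.final then 0 else 1
  | n + 1, s =>
      if s ∈ M.final then 0 else
        (M.enabled s).sup' (M.enabled_nonempty s)
          (fun a => ∑ s' : S, M.prob s a s' * uSurv M n s')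

lemma uSurv_final : ∀ n, ∀ s ∈ M.final, uSurv M n s = 0 := by
  intro n s hs; cases n <;> simp [uSurv, hs]

lemma uSurv_nonneg : ∀ n s, 0 ≤ uSurv M n s := by
  intro n
  induction n with
  | zero => intro s; unfold uSurv; split <;> norm_num
  | succ n ih =>
    intro s
    unfold uSurv
    split
    · rfl
    · obtain ⟨a, ha⟩ := M.enabled_nonempty s
      refine le_trans ?_ (Finset.le_sup' _ ha)
      exact Finset.sum_nonneg fun s' _ => mul_nonneg (M.prob_nonneg _ _ _) (ih s')

lemma uSurv_le_one : ∀ n s, uSurv M n s ≤ 1 := by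
  intro n
  induction n with
  | zero => intro s; unfold uSurv; split <;> norm_num
  | succ n ih =>
    intro s
    unfold uSurv
    split
    · norm_num
    · apply Finset.sup'_le
      intro a ha
      calc ∑ s' : S, M.prob s a s' * uSurv M n s'
          ≤ ∑ s' : S, M.prob s a s' * 1 :=
            Finset.sum_le_sum fun s' _ =>
              mul_le_mul_of_nonneg_left (ih s') (M.prob_nonneg _ _ _)
        _ = 1 := by simp [M.prob_sum s a ha]

lemma uSurv_succ_le : ∀ n s, uSurv M (n + 1) s ≤ uSurv M n s := by
  intro n
  induction n with
  | zero =>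
    intro s
    by_cases hs : s ∈ M.final
    · simp [uSurv_final M _ s hs]
    · have h1 := uSurv_le_one M 1 s
      have h0 : uSurv M 0 s = 1 := by simp [uSurv, hs]
      rw [h0]; exact h1
  | succ n ih =>
    intro s
    show uSurv M (n + 2) s ≤ uSurv M (n + 1) s
    unfold uSurv
    split
    · rfl
    · apply Finset.sup'_le
      intro a ha
      refine le_trans ?_ (Finset.le_sup' _ ha)
      exact Finset.sum_le_sum fun s' _ =>
        mul_le_mul_of_nonneg_left (ih s') (M.prob_nonneg _ _ _)

lemma uSurv_antitone {m n : ℕ} (h : m ≤ n) : ∀ s, uSurv M n s ≤ uSurv M m s := by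
  intro s
  induction n with
  | zero => simp_all
  | succ n ih =>
    rcases Nat.lt_or_ge m (n+1) with hlt | hge
    · exact le_trans (uSurv_succ_le M n s) (ih (Nat.lt_succ_iff.mp hlt))
    · have : m = n + 1 := le_antisymm h hge
      subst this; rfl

lemma EVr_le_uSum {σ : List S → S → A → ℝ} (hσ : ValidStrat M σ) {R : ℝ} (hR0 : 0 ≤ R)
    (hR : ∀ s a, M.rew s a ≤ R) :
    ∀ (n : ℕ) (past : List S) (s : S),
      EVr M σ n past s ≤ R * ∑ k ∈ Finset.range n, uSurv M k s := by
  intro n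
  induction n with
  | zero => intro past s; simp [EVr]
  | succ n ih =>
    intro past s
    simp only [EVr]
    split
    · rename_i hf
      apply mul_nonneg hR0
      exact Finset.sum_nonneg fun k _ => uSurv_nonneg M k s
    · rename_i hf
      apply sum_weight_mul_le M hσ
      intro a ha _
      have hstep : ∀ k, ∑ s' : S, M.prob s a s' * uSurv M k s' ≤ uSurv M (k+1) s := by
        intro k
        have : uSurv M (k+1) s = (M.enabled s).sup' (M.enabled_nonempty s)
            (fun a => ∑ s' : S, M.prob s a s' * uSurv M k s') := by
          simp [uSurv, hf]
        rw [this]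
        exact Finset.le_sup' (fun a => ∑ s' : S, M.prob s a s' * uSurv M k s') ha
      have hsum : ∑ s' : S, M.prob s a s' * EVr M σ n (past ++ [s]) s'
          ≤ R * ∑ k ∈ Finset.range n, uSurv M (k+1) s := by
        calc ∑ s' : S, M.prob s a s' * EVr M σ n (past ++ [s]) s'
            ≤ ∑ s' : S, M.prob s a s' * (R * ∑ k ∈ Finset.range n, uSurv M k s') :=
              Finset.sum_le_sum fun s' _ =>
                mul_le_mul_of_nonneg_left (ih _ s') (M.prob_nonneg _ _ _)
          _ = R * ∑ k ∈ Finset.range n, ∑ s' : S, M.prob s a s' * uSurv M k s' := by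
              simp only [Finset.mul_sum]
              rw [Finset.sum_comm]
              exact Finset.sum_congr rfl fun k _ => Finset.sum_congr rfl fun s' _ => by ring
          _ ≤ R * ∑ k ∈ Finset.range n, uSurv M (k+1) s := by
              apply mul_le_mul_of_nonneg_left _ hR0
              exact Finset.sum_le_sum fun k _ => hstep k
      have h0 : uSurv M 0 s = 1 := by simp [uSurv, hf]
      have : R * ∑ k ∈ Finset.range (n+1), uSurv M k s
          = R + R * ∑ k ∈ Finset.range n, uSurv M (k+1) s := by
        rw [Finset.sum_range_succ']
        rw [h0]
        ring
      rw [this]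
      linarith [hR s a, hsum]
/-- The pure strategy determined by a selector `f`. -/
def selStrat (f : S → A) : List S → S → A → ℝ := fun _ s a => if a = f s then 1 else 0

lemma selStrat_valid (f : S → A) (hf : ∀ s, f s ∈ M.enabled s) :
    ValidStrat M (selStrat f) := by
  intro past s
  refine ⟨fun a => by unfold selStrat; split <;> norm_num, ?_, ?_⟩
  · simp [selStrat, Finset.sum_ite_eq', hf s]
  · intro a ha
    unfold selStrat
    split
    · rename_i h; subst h; exact absurd (hf s) ha
    · rfl

lemma selStrat_sum (f : S → A) (hf : ∀ s, f s ∈ M.enabled s) (past : List S) (s : S)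
    (X : A → ℝ) :
    ∑ a ∈ M.enabled s, selStrat f past s a * X a = X (f s) := by
  unfold selStrat
  simp only [ite_mul, one_mul, zero_mul]
  rw [Finset.sum_ite_eq' (M.enabled s) (f s) X]
  simp [hf s]

lemma exists_uSurv_lt_one [Nonempty S]
    (habs2 : ∀ σ, ValidStrat M σ → ∀ s : S,
      Filter.Tendsto (fun n => ∑ s' ∈ M.final, stateProb M σ n [] s s')
        Filter.atTop (nhds 1)) :
    ∃ N : ℕ, 0 < N ∧ ∀ s, uSurv M N s < 1 := by
  classical
  by_contra hcon
  push_neg at hcon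
  have hall : ∀ N : ℕ, ∃ s, uSurv M N s = 1 := by
    intro N
    obtain ⟨s, hs⟩ := hcon (N + 1) (Nat.succ_pos N)
    exact ⟨s, le_antisymm (uSurv_le_one M _ s) (le_trans hs (uSurv_succ_le M N s))⟩
  set T : ℕ → Finset S := fun n => Finset.univ.filter (fun s => uSurv M n s = 1) with hT
  have hTmem : ∀ n s, s ∈ T n ↔ uSurv M n s = 1 := by
    intro n s; simp [hT]
  have hTsub : ∀ m n, m ≤ n → T n ⊆ T m := by
    intro m n hmn s hs
    rw [hTmem] at hs ⊢
    exact le_antisymm (uSurv_le_one M m s) (hs ▸ uSurv_antitone M hmn s)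
  have hTne : ∀ n, (T n).Nonempty := by
    intro n
    obtain ⟨s, hs⟩ := hall n
    exact ⟨s, (hTmem n s).mpr hs⟩
  obtain ⟨N, hNeq⟩ : ∃ N, ∀ m, N ≤ m → T m = T N := by
    have hne : (Set.range fun n => (T n).card).Nonempty := ⟨(T 0).card, 0, rfl⟩
    obtain ⟨N, hNc⟩ := Nat.sInf_mem hne
    refine ⟨N, fun m hm => ?_⟩
    have h1 : T m ⊆ T N := hTsub N m hm
    have h2 : (T N).card ≤ (T m).card := by
      have h3 : sInf (Set.range fun n => (T n).card) ≤ (T m).card := Nat.sInf_le ⟨m, rfl⟩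
      have h4 : (T N).card = sInf (Set.range fun n => (T n).card) := hNc
      omega
    exact Finset.eq_of_subset_of_card_le h1 h2
  have hTfin : ∀ s ∈ T N, s ∉ M.final := by
    intro s hs hsf
    rw [hTmem] at hs
    rw [uSurv_final M N s hsf] at hs
    norm_num at hs
  have hkey : ∀ s ∈ T N, ∃ a ∈ M.enabled s, ∀ s', 0 < M.prob s a s' → s' ∈ T N := by
    intro s hs
    have hs1 : s ∈ T (N + 1) := (hNeq (N + 1) (Nat.le_succ N)) ▸ hs
    rw [hTmem] at hs1
    have hsf := hTfin s hs
    rw [show uSurv M (N + 1) s = (M.enabled s).sup' (M.enabled_nonempty s)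
        (fun a => ∑ s' : S, M.prob s a s' * uSurv M N s') from by simp [uSurv, hsf]] at hs1
    obtain ⟨a, ha, hav⟩ := Finset.exists_mem_eq_sup' (M.enabled_nonempty s)
      (fun a => ∑ s' : S, M.prob s a s' * uSurv M N s')
    rw [hav] at hs1
    refine ⟨a, ha, fun s' hp => ?_⟩
    have hzero : ∑ s' : S, M.prob s a s' * (1 - uSurv M N s') = 0 := by
      simp only [mul_sub, Finset.sum_sub_distrib, mul_one]
      rw [M.prob_sum s a ha, hs1]
      ring
    have hterm := (Finset.sum_eq_zero_iff_of_nonneg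
      (fun s'' _ => mul_nonneg (M.prob_nonneg s a s'')
        (by linarith [uSurv_le_one M N s'']))).mp hzero s' (Finset.mem_univ s')
    rw [hTmem]
    rcases mul_eq_zero.mp hterm with h | h
    · exact absurd h (ne_of_gt hp)
    · linarith
  let f : S → A := fun s => if h : s ∈ T N then (hkey s h).choose else (M.enabled_nonempty s).choose
  have hfen : ∀ s, f s ∈ M.enabled s := by
    intro s
    by_cases h : s ∈ T N
    · simp only [f, dif_pos h]
      exact (hkey s h).choose_spec.1
    · simp only [f, dif_neg h]
      exact (M.enabled_nonempty s).choose_spec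
  have hfT : ∀ s, s ∈ T N → ∀ s', 0 < M.prob s (f s) s' → s' ∈ T N := by
    intro s h
    simp only [f, dif_pos h]
    exact (hkey s h).choose_spec.2
  have hσ : ValidStrat M (selStrat f) := selStrat_valid M f hfen
  have hzero : ∀ (n : ℕ) (past : List S), ∀ s ∈ T N, ∀ s' ∈ M.final,
      stateProb M (selStrat f) n past s s' = 0 := by
    intro n
    induction n with
    | zero =>
      intro past s hs s' hs'
      simp only [stateProb]
      split
      · rename_i h; exact absurd (h ▸ hs') (hTfin s hs)
      · rfl
    | succ n ih =>
      intro past s hs s' hs'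
      simp only [stateProb, if_neg (hTfin s hs)]
      rw [selStrat_sum M f hfen]
      apply Finset.sum_eq_zero
      intro s'' _
      rcases lt_or_eq_of_le (M.prob_nonneg s (f s) s'') with hp | hp
      · rw [ih (past ++ [s]) s'' (hfT s hs s'' hp) s' hs', mul_zero]
      · rw [← hp, zero_mul]
  obtain ⟨s₀, hs₀⟩ := hTne N
  have htend := habs2 (selStrat f) hσ s₀
  have hconst : (fun n => ∑ s' ∈ M.final, stateProb M (selStrat f) n [] s₀ s') = fun _ => (0:ℝ) := by
    funext n
    exact Finset.sum_eq_zero fun s' hs' => hzero n [] s₀ hs₀ s' hs'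
  rw [hconst] at htend
  have := tendsto_nhds_unique htend tendsto_const_nhds
  norm_num at this
lemma uSurv_submult [Nonempty S] (m : ℕ) :
    ∀ (n : ℕ) (s : S), uSurv M (n + m) s ≤ uSurv M n s *
      Finset.univ.sup' Finset.univ_nonempty (uSurv M m) := by
  have hM0 : (0:ℝ) ≤ Finset.univ.sup' Finset.univ_nonempty (uSurv M m) := by
    obtain ⟨s⟩ := (inferInstance : Nonempty S)
    exact le_trans (uSurv_nonneg M m s) (Finset.le_sup' _ (Finset.mem_univ s))
  intro n
  induction n with
  | zero =>
    intro s
    by_cases hs : s ∈ M.final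
    · simp [uSurv_final M _ s hs]
    · have h0 : uSurv M 0 s = 1 := by simp [uSurv, hs]
      rw [Nat.zero_add, h0, one_mul]
      exact Finset.le_sup' _ (Finset.mem_univ s)
  | succ n ih =>
    intro s
    by_cases hs : s ∈ M.final
    · simp [uSurv_final M _ s hs]
    · have hrw : ∀ k, uSurv M (k + 1) s = (M.enabled s).sup' (M.enabled_nonempty s)
          (fun a => ∑ s' : S, M.prob s a s' * uSurv M k s') := fun k => by simp [uSurv, hs]
      rw [show n + 1 + m = (n + m) + 1 from by omega, hrw (n + m), hrw n]
      apply Finset.sup'_le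
      intro a ha
      calc ∑ s' : S, M.prob s a s' * uSurv M (n + m) s'
          ≤ ∑ s' : S, M.prob s a s' * (uSurv M n s' *
              Finset.univ.sup' Finset.univ_nonempty (uSurv M m)) :=
            Finset.sum_le_sum fun s' _ =>
              mul_le_mul_of_nonneg_left (ih s') (M.prob_nonneg _ _ _)
        _ = (∑ s' : S, M.prob s a s' * uSurv M n s') *
              Finset.univ.sup' Finset.univ_nonempty (uSurv M m) := by
            rw [Finset.sum_mul]
            exact Finset.sum_congr rfl fun s' _ => by ring
        _ ≤ _ := by
            apply mul_le_mul_of_nonneg_right _ hM0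
            exact Finset.le_sup' (fun a => ∑ s' : S, M.prob s a s' * uSurv M n s') ha

lemma uSurv_pow [Nonempty S] (N : ℕ) (θ : ℝ) (hθ : ∀ s, uSurv M N s ≤ θ) (hθ0 : 0 ≤ θ) :
    ∀ (k : ℕ) (s : S), uSurv M (k * N) s ≤ θ ^ k := by
  intro k
  induction k with
  | zero =>
    intro s
    by_cases hs : s ∈ M.final <;> simp [uSurv, hs]
  | succ k ih =>
    intro s
    have h1 := uSurv_submult M (k * N) N s
    rw [show (k + 1) * N = N + k * N from by ring]
    refine le_trans h1 ?_
    rw [pow_succ']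
    apply mul_le_mul (hθ s) (Finset.sup'_le _ _ fun s' _ => ih s') ?_ hθ0
    obtain ⟨s'⟩ := (inferInstance : Nonempty S)
    exact le_trans (uSurv_nonneg M _ s') (Finset.le_sup' _ (Finset.mem_univ s'))

lemma uSum_bounded [Nonempty S]
    (habs2 : ∀ σ, ValidStrat M σ → ∀ s : S,
      Filter.Tendsto (fun n => ∑ s' ∈ M.final, stateProb M σ n [] s s')
        Filter.atTop (nhds 1)) :
    ∃ C : ℝ, 0 ≤ C ∧ ∀ (n : ℕ) (s : S), ∑ k ∈ Finset.range n, uSurv M k s ≤ C := by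
  obtain ⟨N, hNpos, hN⟩ := exists_uSurv_lt_one M habs2
  set θ : ℝ := Finset.univ.sup' Finset.univ_nonempty (uSurv M N) with hθdef
  have hθ : ∀ s, uSurv M N s ≤ θ := fun s => Finset.le_sup' _ (Finset.mem_univ s)
  have hθ1 : θ < 1 := (Finset.sup'_lt_iff _).mpr fun s _ => hN s
  have hθ0 : 0 ≤ θ := by
    obtain ⟨s⟩ := (inferInstance : Nonempty S)
    exact le_trans (uSurv_nonneg M N s) (hθ s)
  have hC0 : (0:ℝ) ≤ (N : ℝ) * (1 - θ)⁻¹ := by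
    apply mul_nonneg (Nat.cast_nonneg N)
    rw [inv_nonneg]
    linarith
  refine ⟨(N : ℝ) * (1 - θ)⁻¹, hC0, ?_⟩
  have claim1 : ∀ (m : ℕ) (s : S), ∑ k ∈ Finset.range (m * N), uSurv M k s ≤
      ∑ j ∈ Finset.range m, (N : ℝ) * θ ^ j := by
    intro m
    induction m with
    | zero => intro s; simp
    | succ m ih =>
      intro s
      rw [show (m + 1) * N = m * N + N from by ring, Finset.sum_range_add,
        Finset.sum_range_succ]
      apply add_le_add (ih s)
      calc ∑ i ∈ Finset.range N, uSurv M (m * N + i) s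
          ≤ ∑ _i ∈ Finset.range N, θ ^ m :=
            Finset.sum_le_sum fun i _ =>
              le_trans (uSurv_antitone M (Nat.le_add_right _ _) s)
                (uSurv_pow M N θ hθ hθ0 m s)
        _ = (N : ℝ) * θ ^ m := by simp [mul_comm]
  intro n s
  have hsub : ∑ k ∈ Finset.range n, uSurv M k s ≤ ∑ k ∈ Finset.range (n * N), uSurv M k s := by
    apply Finset.sum_le_sum_of_subset_of_nonneg
    · exact Finset.range_subset_range.mpr (Nat.le_mul_of_pos_right n hNpos)
    · intro k _ _; exact uSurv_nonneg M k s
  refine le_trans hsub (le_trans (claim1 n s) ?_)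
  rw [← Finset.mul_sum]
  apply mul_le_mul_of_nonneg_left _ (Nat.cast_nonneg N)
  exact sum_le_hasSum _ (fun i _ => by positivity) (hasSum_geometric_of_lt_one hθ0 hθ1)
lemma absProb_zero (σ : List S → S → A → ℝ) (past : List S) (s : S) :
    ∑ s' ∈ M.final, stateProb M σ 0 past s s' = if s ∈ M.final then 1 else 0 := by
  simp only [stateProb]
  rw [Finset.sum_ite_eq' M.final s fun _ => (1:ℝ)]

lemma absProb_succ (σ : List S → S → A → ℝ) (n : ℕ) (past : List S) (s : S) (h : s ∉ M.final) :
    ∑ s' ∈ M.final, stateProb M σ (n + 1) past s s' =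
      ∑ a ∈ M.enabled s, σ past s a * ∑ s'' : S, M.prob s a s'' *
        ∑ s' ∈ M.final, stateProb M σ n (past ++ [s]) s'' s' := by
  simp only [stateProb, if_neg h]
  rw [Finset.sum_comm]
  apply Finset.sum_congr rfl
  intro a _
  rw [← Finset.mul_sum]
  congr 1
  rw [Finset.sum_comm]
  exact Finset.sum_congr rfl fun s'' _ => (Finset.mul_sum _ _ _).symm

lemma lower_bound_aux (SMin : Finset S) (P : S → ℝ) (B' : ℝ)
    (hB'0 : 0 ≤ B') (hPB : ∀ s, P s ≤ B')
    (hfin : ∀ s ∈ M.final, P s = 0)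
    (hMin : ∀ s, s ∉ M.final → s ∈ SMin → ∀ a ∈ M.enabled s, P s ≤ Bell M P s a)
    {σ : List S → S → A → ℝ} (hσ : ValidStrat M σ)
    (hσMax : ∀ past s, s ∉ M.final → s ∉ SMin →
      ∑ a ∈ M.enabled s, σ past s a * Bell M P s a = P s) :
    ∀ (n : ℕ) (past : List S) (s : S),
      P s ≤ EVr M σ n past s + B' * (1 - ∑ s' ∈ M.final, stateProb M σ n past s s') := by
  intro n
  induction n with
  | zero =>
    intro past s
    rw [absProb_zero]
    by_cases hs : s ∈ M.final
    · simp [EVr, hfin s hs, hs]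
    · simp only [EVr, if_neg hs]
      norm_num
      linarith [hPB s]
  | succ n ih =>
    intro past s
    by_cases hs : s ∈ M.final
    · have h1 : ∑ s' ∈ M.final, stateProb M σ (n + 1) past s s' = 1 := by
        simp only [stateProb, if_pos hs]
        rw [Finset.sum_ite_eq' M.final s fun _ => (1:ℝ)]
        simp [hs]
      rw [h1, hfin s hs]
      simp only [EVr, if_pos hs]
      norm_num
    · rw [absProb_succ M σ n past s hs]
      simp only [EVr, if_neg hs]
      have hBell : P s ≤ ∑ a ∈ M.enabled s, σ past s a * Bell M P s a := by
        by_cases hsm : s ∈ SMin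
        · have h5 : ∑ a ∈ M.enabled s, σ past s a * P s ≤
              ∑ a ∈ M.enabled s, σ past s a * Bell M P s a :=
            Finset.sum_le_sum fun a ha =>
              mul_le_mul_of_nonneg_left (hMin s hs hsm a ha) ((hσ past s).1 a)
          calc P s = ∑ a ∈ M.enabled s, σ past s a * P s := by
                rw [← Finset.sum_mul, (hσ past s).2.1, one_mul]
            _ ≤ _ := h5
        · exact le_of_eq (hσMax past s hs hsm).symm
      have hterm : ∀ a ∈ M.enabled s, Bell M P s a ≤
          (M.rew s a + ∑ s' : S, M.prob s a s' * EVr M σ n (past ++ [s]) s')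
          + B' * (1 - ∑ s'' : S, M.prob s a s'' *
              ∑ s' ∈ M.final, stateProb M σ n (past ++ [s]) s'' s') := by
        intro a ha
        unfold Bell
        have h2 : ∑ s' : S, M.prob s a s' * P s' ≤
            ∑ s' : S, M.prob s a s' * (EVr M σ n (past ++ [s]) s'
              + B' * (1 - ∑ s'' ∈ M.final, stateProb M σ n (past ++ [s]) s' s'')) :=
          Finset.sum_le_sum fun s' _ =>
            mul_le_mul_of_nonneg_left (ih (past ++ [s]) s') (M.prob_nonneg _ _ _)
        have h3 : ∑ s' : S, M.prob s a s' * (EVr M σ n (past ++ [s]) s'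
              + B' * (1 - ∑ s'' ∈ M.final, stateProb M σ n (past ++ [s]) s' s''))
            = (∑ s' : S, M.prob s a s' * EVr M σ n (past ++ [s]) s')
              + B' * (1 - ∑ s' : S, M.prob s a s' *
                  ∑ s'' ∈ M.final, stateProb M σ n (past ++ [s]) s' s'') := by
          have e1 : ∀ s' : S, M.prob s a s' * (EVr M σ n (past ++ [s]) s'
              + B' * (1 - ∑ s'' ∈ M.final, stateProb M σ n (past ++ [s]) s' s''))
              = M.prob s a s' * EVr M σ n (past ++ [s]) s'
                + (B' * M.prob s a s' - B' * (M.prob s a s' *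
                    ∑ s'' ∈ M.final, stateProb M σ n (past ++ [s]) s' s'')) := fun s' => by ring
          rw [Finset.sum_congr rfl fun s' _ => e1 s']
          rw [Finset.sum_add_distrib, Finset.sum_sub_distrib, ← Finset.mul_sum, ← Finset.mul_sum,
            M.prob_sum s a ha, mul_one]
          ring
        rw [h3] at h2
        linarith
      have hfinal : ∑ a ∈ M.enabled s, σ past s a * Bell M P s a ≤
          (∑ a ∈ M.enabled s, σ past s a *
            (M.rew s a + ∑ s' : S, M.prob s a s' * EVr M σ n (past ++ [s]) s'))
          + B' * (1 - ∑ a ∈ M.enabled s, σ past s a * ∑ s'' : S, M.prob s a s'' *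
              ∑ s' ∈ M.final, stateProb M σ n (past ++ [s]) s'' s') := by
        have h6 : ∑ a ∈ M.enabled s, σ past s a * Bell M P s a ≤
            ∑ a ∈ M.enabled s, σ past s a *
              ((M.rew s a + ∑ s' : S, M.prob s a s' * EVr M σ n (past ++ [s]) s')
              + B' * (1 - ∑ s'' : S, M.prob s a s'' *
                  ∑ s' ∈ M.final, stateProb M σ n (past ++ [s]) s'' s')) :=
          Finset.sum_le_sum fun a ha =>
            mul_le_mul_of_nonneg_left (hterm a ha) ((hσ past s).1 a)
        have h7 : ∑ a ∈ M.enabled s, σ past s a *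
              ((M.rew s a + ∑ s' : S, M.prob s a s' * EVr M σ n (past ++ [s]) s')
              + B' * (1 - ∑ s'' : S, M.prob s a s'' *
                  ∑ s' ∈ M.final, stateProb M σ n (past ++ [s]) s'' s'))
            = (∑ a ∈ M.enabled s, σ past s a *
                (M.rew s a + ∑ s' : S, M.prob s a s' * EVr M σ n (past ++ [s]) s'))
              + B' * (1 - ∑ a ∈ M.enabled s, σ past s a * ∑ s'' : S, M.prob s a s'' *
                  ∑ s' ∈ M.final, stateProb M σ n (past ++ [s]) s'' s') := by
          have e2 : ∀ a : A, σ past s a *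
              ((M.rew s a + ∑ s' : S, M.prob s a s' * EVr M σ n (past ++ [s]) s')
              + B' * (1 - ∑ s'' : S, M.prob s a s'' *
                  ∑ s' ∈ M.final, stateProb M σ n (past ++ [s]) s'' s'))
              = σ past s a *
                (M.rew s a + ∑ s' : S, M.prob s a s' * EVr M σ n (past ++ [s]) s')
                + (B' * σ past s a - B' * (σ past s a * ∑ s'' : S, M.prob s a s'' *
                    ∑ s' ∈ M.final, stateProb M σ n (past ++ [s]) s'' s')) := fun a => by ring
          rw [Finset.sum_congr rfl fun a _ => e2 a]
          rw [Finset.sum_add_distrib, Finset.sum_sub_distrib, ← Finset.mul_sum, ← Finset.mul_sum,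
            (hσ past s).2.1, mul_one]
          ring
        rw [h7] at h6
        exact h6
      linarith
end Aux

/-- If `P` solves the optimality equations, every enabled action at a Max state
has Bellman value at most `P`, and absorption in the final set is almost sure
under all strategy pairs, then every `ε`-greedy Min strategy guarantees losing
at most `P(s) + ε` against any Max strategy; consequently the game is
determined with value `P`. -/
theorem greedy_eps_optimal_and_determined
    (M : FinMDP S A) (SMin : Finset S) (P : S → ℝ)
    (hP0 : ∀ s, 0 ≤ P s) (B : ℝ) (hPB : ∀ s, P s ≤ B)
    (hopt : OptEq M SMin P)
    (hMax : ∀ s, s ∉ M.final → s ∉ SMin → ∀ a ∈ M.enabled s,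
      Bell M P s a ≤ P s)
    (habs : ∀ μ χ, ValidStrat M μ → ValidStrat M χ → ∀ s : S,
      Filter.Tendsto
        (fun n => ∑ s' ∈ M.final, stateProb M (combine SMin μ χ) n [] s s')
        Filter.atTop (nhds 1)) :
    (∀ ε > (0 : ℝ), ∀ μ, ValidStrat M μ → Greedy M SMin P ε μ →
      ∀ χ, ValidStrat M χ → ∀ s : S,
        EReach M (combine SMin μ χ) s - ε ≤ P s) ∧
    (∀ s : S,
      (⨆ χ : {χ // ValidStrat M χ}, ⨅ μ : {μ // ValidStrat M μ},
          EReach M (combine SMin μ.1 χ.1) s) = P s ∧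
      (⨅ μ : {μ // ValidStrat M μ}, ⨆ χ : {χ // ValidStrat M χ},
          EReach M (combine SMin μ.1 χ.1) s) = P s) := by
  classical
  have hpart1 : ∀ ε > (0 : ℝ), ∀ μ, ValidStrat M μ → Greedy M SMin P ε μ →
      ∀ χ, ValidStrat M χ → ∀ s : S,
        EReach M (combine SMin μ χ) s - ε ≤ P s := by
    intro ε hε μ hμ hg χ hχ s
    have h1 : EReach M (combine SMin μ χ) s ≤ P s + ε := by
      apply ciSup_le
      intro n
      have := EVr_le_greedy M hμ hχ SMin P hP0 (le_of_lt hε) hg hMax n [] s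
      simpa using this
    linarith
  refine ⟨hpart1, ?_⟩
  intro s
  haveI : Nonempty S := ⟨s⟩
  -- absorption for a single strategy
  have habs2 : ∀ σ, ValidStrat M σ → ∀ s : S,
      Filter.Tendsto (fun n => ∑ s' ∈ M.final, stateProb M σ n [] s s')
        Filter.atTop (nhds 1) := by
    intro σ hσ s'
    have hcomb : combine SMin σ σ = σ := by
      funext past t; simp [combine]
    have := habs σ σ hσ hσ s'
    rwa [hcomb] at this
  obtain ⟨C, hC0, hC⟩ := uSum_bounded M habs2
  obtain ⟨R, hR⟩ := Finite.exists_le (fun p : S × A => M.rew p.1 p.2)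
  set R' : ℝ := max R 0 with hR'def
  have hR'0 : 0 ≤ R' := le_max_right R 0
  have hR' : ∀ t a, M.rew t a ≤ R' := fun t a => le_trans (hR (t, a)) (le_max_left R 0)
  -- uniform bound on EVr and EReach
  have hEVrB : ∀ σ, ValidStrat M σ → ∀ (n : ℕ) (past : List S) (t : S),
      EVr M σ n past t ≤ R' * C := by
    intro σ hσ n past t
    refine le_trans (EVr_le_uSum M hσ hR'0 hR' n past t) ?_
    exact mul_le_mul_of_nonneg_left (hC n t) hR'0
  have hbddA : ∀ σ (t : S), ValidStrat M σ →
      BddAbove (Set.range fun n => EVr M σ n [] t) := by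
    intro σ t hσ
    exact ⟨R' * C, fun y ⟨n, hn⟩ => hn ▸ hEVrB σ hσ n [] t⟩
  have hERle : ∀ σ, ValidStrat M σ → ∀ t : S, EReach M σ t ≤ R' * C := by
    intro σ hσ t
    exact ciSup_le fun n => hEVrB σ hσ n [] t
  have hER0 : ∀ σ, ValidStrat M σ → ∀ t : S, 0 ≤ EReach M σ t := by
    intro σ hσ t
    exact Real.iSup_nonneg fun n => EVr_nonneg M hσ n [] t
  -- the exactly optimal Min strategy
  set fmin : S → A := fun t => (Finset.exists_mem_eq_inf' (M.enabled_nonempty t) (Bell M P t)).choose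
    with hfmindef
  have hfmin : ∀ t, fmin t ∈ M.enabled t ∧
      (M.enabled t).inf' (M.enabled_nonempty t) (Bell M P t) = Bell M P t (fmin t) := by
    intro t
    obtain ⟨h1, h2⟩ := (Finset.exists_mem_eq_inf' (M.enabled_nonempty t) (Bell M P t)).choose_spec
    exact ⟨h1, h2⟩
  set μstar := selStrat (S := S) (A := A) fmin with hμstardef
  have hμstarv : ValidStrat M μstar := selStrat_valid M fmin fun t => (hfmin t).1
  have hμstarg : ∀ ε : ℝ, 0 < ε → Greedy M SMin P ε μstar := by
    intro ε hε past t htm htf a ha hne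
    have ha' : a = fmin t := by
      by_contra hcon
      exact hne (by simp [hμstardef, selStrat, hcon])
    rw [ha', ← (hfmin t).2, ← hopt.2.1 t htf htm]
    have : 0 ≤ ε / 2 ^ (past.length + 1) := by positivity
    linarith
  -- the exactly optimal Max strategy
  set fmax : S → A := fun t => (Finset.exists_mem_eq_sup' (M.enabled_nonempty t) (Bell M P t)).choose
    with hfmaxdef
  have hfmax : ∀ t, fmax t ∈ M.enabled t ∧
      (M.enabled t).sup' (M.enabled_nonempty t) (Bell M P t) = Bell M P t (fmax t) := by
    intro t
    obtain ⟨h1, h2⟩ := (Finset.exists_mem_eq_sup' (M.enabled_nonempty t) (Bell M P t)).choose_spec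
    exact ⟨h1, h2⟩
  set χstar := selStrat (S := S) (A := A) fmax with hχstardef
  have hχstarv : ValidStrat M χstar := selStrat_valid M fmax fun t => (hfmax t).1
  -- upper bound for μstar
  have hup : ∀ χ, ValidStrat M χ → EReach M (combine SMin μstar χ) s ≤ P s := by
    intro χ hχ
    apply le_of_forall_pos_le_add
    intro ε hε
    have := hpart1 ε hε μstar hμstarv (hμstarg ε hε) χ hχ s
    linarith
  -- lower bound for χstar
  set B' : ℝ := max B 0 with hB'def
  have hB'0 : 0 ≤ B' := le_max_right B 0
  have hPB' : ∀ t, P t ≤ B' := fun t => le_trans (hPB t) (le_max_left B 0)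
  have hlow : ∀ μ, ValidStrat M μ → P s ≤ EReach M (combine SMin μ χstar) s := by
    intro μ hμ
    set σ := combine SMin μ χstar with hσdef
    have hσv : ValidStrat M σ := combine_valid M SMin hμ hχstarv
    have hσMax : ∀ past t, t ∉ M.final → t ∉ SMin →
        ∑ a ∈ M.enabled t, σ past t a * Bell M P t a = P t := by
      intro past t htf htm
      have h1 : ∀ a, σ past t a = selStrat fmax past t a := by
        intro a; simp [hσdef, combine, htm, hχstardef]
      rw [Finset.sum_congr rfl fun a _ => by rw [h1 a]]
      rw [selStrat_sum M fmax (fun t => (hfmax t).1) past t (Bell M P t)]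
      rw [← (hfmax t).2, ← hopt.2.2 t htf htm]
    have hMin' : ∀ t, t ∉ M.final → t ∈ SMin → ∀ a ∈ M.enabled t, P t ≤ Bell M P t a := by
      intro t htf htm a ha
      rw [hopt.2.1 t htf htm]
      exact Finset.inf'_le _ ha
    have hlb := lower_bound_aux M SMin P B' hB'0 hPB' hopt.1 hMin' hσv hσMax
    have hten := habs μ χstar hμ hχstarv s
    have hten2 : Filter.Tendsto
        (fun n => EReach M σ s + B' * (1 - ∑ s' ∈ M.final, stateProb M σ n [] s s'))
        Filter.atTop (nhds (EReach M σ s)) := by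
      have h3 : Filter.Tendsto
          (fun n => (1:ℝ) - ∑ s' ∈ M.final, stateProb M σ n [] s s')
          Filter.atTop (nhds 0) := by
        have := (tendsto_const_nhds (x := (1:ℝ)) (f := Filter.atTop (α := ℕ))).sub hten
        simpa using this
      have h4 := (h3.const_mul B').const_add (EReach M σ s)
      simpa using h4
    apply ge_of_tendsto' hten2
    intro n
    refine le_trans (hlb n [] s) ?_
    have h5 : EVr M σ n [] s ≤ EReach M σ s := le_ciSup (hbddA σ s hσv) n
    linarith
  -- assemble
  haveI hne1 : Nonempty {χ // ValidStrat M χ} := ⟨⟨χstar, hχstarv⟩⟩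
  haveI hne2 : Nonempty {μ // ValidStrat M μ} := ⟨⟨μstar, hμstarv⟩⟩
  have hbdd0 : ∀ χ : {χ // ValidStrat M χ},
      BddBelow (Set.range fun μ : {μ // ValidStrat M μ} =>
        EReach M (combine SMin μ.1 χ.1) s) := by
    intro χ
    exact ⟨0, fun y ⟨μ, hμ⟩ => hμ ▸ hER0 _ (combine_valid M SMin μ.2 χ.2) s⟩
  constructor
  · apply le_antisymm
    · apply ciSup_le
      intro χ
      exact ciInf_le_of_le (hbdd0 χ) ⟨μstar, hμstarv⟩ (hup χ.1 χ.2)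
    · apply le_ciSup_of_le ?_ ⟨χstar, hχstarv⟩
      · exact le_ciInf fun μ => hlow μ.1 μ.2
      · refine ⟨R' * C, fun y ⟨χ, hχ⟩ => ?_⟩
        rw [← hχ]
        exact ciInf_le_of_le (hbdd0 χ) ⟨μstar, hμstarv⟩
          (hERle _ (combine_valid M SMin hμstarv χ.2) s)
  · apply le_antisymm
    · apply ciInf_le_of_le ?_ ⟨μstar, hμstarv⟩
      · exact ciSup_le fun χ => hup χ.1 χ.2
      · refine ⟨0, fun y ⟨μ, hμ⟩ => ?_⟩
        rw [← hμ]
        exact Real.iSup_nonneg fun χ => hER0 _ (combine_valid M SMin μ.2 χ.2) s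
    · apply le_ciInf
      intro μ
      apply le_ciSup_of_le ?_ ⟨χstar, hχstarv⟩ (hlow μ.1 μ.2)
      refine ⟨R' * C, fun y ⟨χ, hχ⟩ => ?_⟩
      rw [← hχ]
      exact hERle _ (combine_valid M SMin μ.2 χ.2) s
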